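/- arXiv:1303.7256 — 2 statements merged into one kernel-verified Lean document; each statement's English description precedes it below -/
import Mathlib

section
/- For p = (p₁,p₂,p₃,p₄) ∈ ℤ⁴ write |p|² = p₁²+p₂²+p₃²+p₄² and σ(p) = p₁+p₂+p₃+p₄. Then lim_{α→0⁺} α³ · ∑_{p∈ℤ⁴} σ(p)² · e^{-α(|p|² + σ(p)²)} = 2π²/(5√5). -/
open Filter

open Real MeasureTheory Topology Matrix

/-!
With `h = √α`, the sum times `α³` equals `h⁴ ∑_p g(h p)` for the density
`g(x) = σ(x)² e^{-(|x|² + σ(x)²)}`, i.e. a Riemann sum of `g` over the grid `hℤ⁴`. That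
Riemann sum is exactly the integral of `g` composed with rounding down to the grid, so
dominated convergence (with a Gaussian majorant) shows that it tends to `∫_{ℝ⁴} g`. In the
orthogonal Helmert coordinates `x = y₀(1,-1,0,0) + y₁(1,1,-2,0) + y₂(1,1,1,-3) + y₃(1,1,1,1)`
one has `σ = 4y₃` and `|x|² + σ² = 2y₀² + 6y₁² + 12y₂² + 20y₃²`, so the integral factors
into one-dimensional Gaussian moments and equals `2π²/(5√5)`.
-/

lemma integrable_sq_mul_exp_neg_mul_sq {b : ℝ} (hb : 0 < b) :
    Integrable fun x : ℝ => x ^ 2 * exp (-b * x ^ 2) := by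
  simpa only [Real.rpow_two] using
    integrable_rpow_mul_exp_neg_mul_sq hb (s := 2) (by norm_num)

lemma integral_sq_mul_exp_neg_mul_sq {b : ℝ} (hb : 0 < b) :
    ∫ x : ℝ, x ^ 2 * exp (-b * x ^ 2) = √(π / b) / (2 * b) := by
  have hderiv (x : ℝ) : HasDerivAt (fun x => x * exp (-b * x ^ 2))
      (exp (-b * x ^ 2) - 2 * b * (x ^ 2 * exp (-b * x ^ 2))) x := by
    refine ((hasDerivAt_id x).fun_mul
      ((hasDerivAt_pow 2 x).const_mul (-b)).exp).congr_deriv ?_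
    simp only [id_eq]
    ring
  have hlim : Tendsto (fun x : ℝ => x * exp (-b * x ^ 2)) (cocompact ℝ) (𝓝 0) := by
    rw [tendsto_zero_iff_norm_tendsto_zero]
    simpa [abs_mul] using tendsto_rpow_abs_mul_exp_neg_mul_sq_cocompact hb 1
  have hsq := (integrable_sq_mul_exp_neg_mul_sq hb).const_mul (2 * b)
  have h := integral_of_hasDerivAt_of_tendsto hderiv ((integrable_exp_neg_mul_sq hb).sub hsq)
    (hlim.mono_left atBot_le_cocompact) (hlim.mono_left atTop_le_cocompact)
  rw [integral_sub (integrable_exp_neg_mul_sq hb) hsq, integral_const_mul, integral_gaussian,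
    sub_zero] at h
  rw [eq_div_iff (by positivity)]
  linarith

section LatticeRiemannSum

variable {ι : Type*} [Fintype ι]

lemma abs_mul_floor_div_sub_le {h : ℝ} (hh : 0 < h) (t : ℝ) : |h * ⌊t / h⌋ - t| ≤ h := by
  have hlow : h * ⌊t / h⌋ ≤ t := by
    simpa [mul_div_cancel₀ t hh.ne'] using
      mul_le_mul_of_nonneg_left (Int.floor_le (t / h)) hh.le
  have hup : t < h * ⌊t / h⌋ + h := by
    simpa [mul_add, mul_div_cancel₀ t hh.ne'] using
      mul_lt_mul_of_pos_left (Int.lt_floor_add_one (t / h)) hh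
  rw [abs_le]
  constructor <;> linarith

lemma tendsto_mul_floor_div (t : ℝ) :
    Tendsto (fun h : ℝ => h * ⌊t / h⌋) (𝓝[>] 0) (𝓝 t) := by
  have hdist : Tendsto (fun h : ℝ => h * ⌊t / h⌋ - t) (𝓝[>] 0) (𝓝 0) :=
    squeeze_zero_norm'
      (eventually_nhdsWithin_of_forall fun h hh => abs_mul_floor_div_sub_le hh t)
      nhdsWithin_le_nhds
  simpa using hdist.add_const t

lemma integral_comp_floor (g : (ι → ℤ) → ℝ)
    (hg : Integrable fun y : ι → ℝ => g fun i => ⌊y i⌋) :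
    ∫ y : ι → ℝ, g (fun i => ⌊y i⌋) = ∑' p, g p := by
  set cube : (ι → ℤ) → Set (ι → ℝ) := fun p =>
    Set.univ.pi fun i => Set.Ico (p i : ℝ) (p i + 1)
  have mem_cube (p : ι → ℤ) (y : ι → ℝ) : y ∈ cube p ↔ (fun i => ⌊y i⌋) = p := by
    simp only [cube, Set.mem_univ_pi, Set.mem_Ico, funext_iff, Int.floor_eq_iff]
  have hmeas (p : ι → ℤ) : MeasurableSet (cube p) :=
    MeasurableSet.univ_pi fun _ => measurableSet_Ico
  have hdisj : Pairwise (Function.onFun Disjoint cube) := fun p q hpq =>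
    Set.disjoint_left.mpr fun y hp hq =>
      hpq (((mem_cube p y).mp hp).symm.trans ((mem_cube q y).mp hq))
  have hunion : (⋃ p, cube p) = Set.univ :=
    Set.eq_univ_of_forall fun y => Set.mem_iUnion.mpr ⟨_, (mem_cube _ y).mpr rfl⟩
  have hvol (p : ι → ℤ) : volume.real (cube p) = 1 := by
    simp [cube, measureReal_def, volume_pi_pi, Real.volume_Ico]
  calc ∫ y : ι → ℝ, g (fun i => ⌊y i⌋)
      = ∑' p, ∫ y in cube p, g (fun i => ⌊y i⌋) := by
        rw [← integral_iUnion hmeas hdisj (hunion ▸ hg.integrableOn), hunion, setIntegral_univ]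
    _ = ∑' p, g p := by
        refine tsum_congr fun p => ?_
        rw [setIntegral_congr_fun (hmeas p) fun y hy => congrArg g ((mem_cube p y).mp hy),
          setIntegral_const, hvol, one_smul]

noncomputable def latticeRiemannSum (f : (ι → ℝ) → ℝ) (h : ℝ) : ℝ :=
  h ^ Fintype.card ι * ∑' p : ι → ℤ, f fun i => h * p i

lemma integral_comp_mul_floor_div {f : (ι → ℝ) → ℝ} {h : ℝ} (hh : 0 < h)
    (hf : Integrable fun x : ι → ℝ => f fun i => h * ⌊x i / h⌋) :
    ∫ x : ι → ℝ, f (fun i => h * ⌊x i / h⌋) = latticeRiemannSum f h := by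
  set g : (ι → ℤ) → ℝ := fun p => f fun i => h * p i
  have hrescale (y : ι → ℝ) : g (fun i => ⌊y i⌋) = f fun i => h * ⌊(h • y) i / h⌋ := by
    simp [g, mul_div_cancel_left₀ _ hh.ne']
  have hg : Integrable fun y : ι → ℝ => g fun i => ⌊y i⌋ := by
    simpa only [hrescale] using hf.comp_smul hh.ne'
  have hscale := Measure.integral_comp_inv_smul_of_nonneg volume
    (fun y : ι → ℝ => g fun i => ⌊y i⌋) hh.le
  simp only [Module.finrank_fintype_fun_eq_card, smul_eq_mul] at hscale
  rw [latticeRiemannSum, ← integral_comp_floor g hg, ← hscale]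
  simp [g, inv_mul_eq_div]

theorem tendsto_latticeRiemannSum {f : (ι → ℝ) → ℝ} (hf : Continuous f) {G : (ι → ℝ) → ℝ}
    (hG : Integrable G) (hfG : ∀ x z : ι → ℝ, (∀ i, |z i - x i| ≤ 1) → |f z| ≤ G x) :
    Tendsto (latticeRiemannSum f) (𝓝[>] 0) (𝓝 (∫ x, f x)) := by
  have hdom : ∀ᶠ h in 𝓝[>] (0 : ℝ), ∀ x : ι → ℝ, ‖f fun i => h * ⌊x i / h⌋‖ ≤ G x := by
    filter_upwards [Ioc_mem_nhdsGT zero_lt_one] with h hh x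
    exact hfG x _ fun i => (abs_mul_floor_div_sub_le hh.1 (x i)).trans hh.2
  have hmeas (h : ℝ) : AEStronglyMeasurable (fun x : ι → ℝ => f fun i => h * ⌊x i / h⌋) :=
    (hf.measurable.comp (by fun_prop)).aestronglyMeasurable
  have hlim := tendsto_integral_filter_of_dominated_convergence G (.of_forall hmeas)
    (hdom.mono fun h hh => .of_forall hh) hG (.of_forall fun x =>
      (hf.tendsto x).comp (tendsto_pi_nhds.mpr fun i => tendsto_mul_floor_div (x i)))
  refine hlim.congr' ?_
  filter_upwards [hdom, self_mem_nhdsWithin] with h hh hpos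
  exact integral_comp_mul_floor_div hpos (hG.mono' (hmeas h) (.of_forall hh))

end LatticeRiemannSum

section SecondMomentDensity

variable {ι : Type*} [Fintype ι]

lemma exp_neg_sum_sq_le_of_abs_sub_le {x z : ι → ℝ} (hzx : ∀ i, |z i - x i| ≤ 1) :
    exp (-∑ i, z i ^ 2) ≤ exp (Fintype.card ι) * exp (-(∑ i, x i ^ 2) / 2) := by
  have hcoord (i : ι) : x i ^ 2 / 2 - 1 ≤ z i ^ 2 := by
    nlinarith [sq_abs (z i - x i), abs_nonneg (z i - x i), hzx i, sq_nonneg (x i - 2 * z i)]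
  have hsum := Finset.sum_le_sum fun i (_ : i ∈ Finset.univ) => hcoord i
  rw [Finset.sum_sub_distrib, ← Finset.sum_div, Finset.sum_const, Finset.card_univ,
    nsmul_one] at hsum
  rw [← exp_add, exp_le_exp]
  linarith

lemma integrable_exp_neg_sum_sq_div_two :
    Integrable fun x : ι → ℝ => exp (-(∑ i, x i ^ 2) / 2) := by
  refine (Integrable.fintype_prod fun _ => integrable_exp_neg_mul_sq one_half_pos).congr
    (.of_forall fun x => ?_)
  simp only [← exp_sum]
  congr 1
  rw [neg_div, Finset.sum_div, ← Finset.sum_neg_distrib]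
  exact Finset.sum_congr rfl fun i _ => by ring

noncomputable def secondMomentDensity (x : ι → ℝ) : ℝ :=
  (∑ i, x i) ^ 2 * exp (-((∑ i, x i ^ 2) + (∑ i, x i) ^ 2))

lemma continuous_secondMomentDensity : Continuous (secondMomentDensity (ι := ι)) := by
  unfold secondMomentDensity
  fun_prop

lemma secondMomentDensity_nonneg (x : ι → ℝ) : 0 ≤ secondMomentDensity x := by
  unfold secondMomentDensity
  positivity

lemma secondMomentDensity_le_exp_neg (x : ι → ℝ) :
    secondMomentDensity x ≤ exp (-∑ i, x i ^ 2) := by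
  have hpeak : (∑ i, x i) ^ 2 * exp (-(∑ i, x i) ^ 2) ≤ 1 :=
    (mul_exp_neg_le_exp_neg_one _).trans (exp_le_one_iff.mpr (by norm_num))
  calc secondMomentDensity x
      = (∑ i, x i) ^ 2 * exp (-(∑ i, x i) ^ 2) * exp (-∑ i, x i ^ 2) := by
        rw [secondMomentDensity, mul_assoc, ← exp_add]
        ring_nf
    _ ≤ exp (-∑ i, x i ^ 2) := mul_le_of_le_one_left (exp_pos _).le hpeak

lemma secondMomentDensity_smul (c : ℝ) (x : ι → ℝ) :
    secondMomentDensity (c • x) =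
      c ^ 2 * ((∑ i, x i) ^ 2 * exp (-c ^ 2 * ((∑ i, x i ^ 2) + (∑ i, x i) ^ 2))) := by
  simp only [secondMomentDensity, Pi.smul_apply, smul_eq_mul, mul_pow, ← Finset.mul_sum]
  ring_nf

lemma abs_secondMomentDensity_le {x z : ι → ℝ} (hzx : ∀ i, |z i - x i| ≤ 1) :
    |secondMomentDensity z| ≤ exp (Fintype.card ι) * exp (-(∑ i, x i ^ 2) / 2) := by
  rw [abs_of_nonneg (secondMomentDensity_nonneg z)]
  exact (secondMomentDensity_le_exp_neg z).trans (exp_neg_sum_sq_le_of_abs_sub_le hzx)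

lemma latticeRiemannSum_secondMomentDensity_sqrt {α : ℝ} (hα : 0 ≤ α) :
    latticeRiemannSum (secondMomentDensity (ι := ι)) √α = √α ^ Fintype.card ι * α *
      ∑' p : ι → ℤ, (∑ i, (p i : ℝ)) ^ 2 *
        exp (-α * ((∑ i, (p i : ℝ) ^ 2) + (∑ i, (p i : ℝ)) ^ 2)) := by
  have hsmul (p : ι → ℤ) : (fun i => √α * (p i : ℝ)) = √α • fun i => (p i : ℝ) := rfl
  simp only [latticeRiemannSum, hsmul, secondMomentDensity_smul, sq_sqrt hα, tsum_mul_left]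
  ring

end SecondMomentDensity

lemma integral_comp_mulVec {ι : Type*} [Fintype ι] [DecidableEq ι] {M : Matrix ι ι ℝ}
    (hM : M.det ≠ 0) (f : (ι → ℝ) → ℝ) :
    ∫ y, f (M *ᵥ y) = |M.det|⁻¹ * ∫ x, f x := by
  have hinj : Function.Injective (toLin' M) := mulVec_injective_of_det_ne_zero hM
  have hemb : MeasurableEmbedding (toLin' M) :=
    (LinearEquiv.ofInjectiveEndo _ hinj).toContinuousLinearEquiv.toHomeomorph
      |>.measurableEmbedding
  have := hemb.integral_map (μ := volume) f
  rw [Real.map_matrix_volume_pi_eq_smul_volume_pi hM, integral_smul_measure,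
    ENNReal.toReal_ofReal (abs_nonneg _), abs_inv] at this
  simpa using this.symm

def helmert : Matrix (Fin 4) (Fin 4) ℝ := !![1, 1, 1, 1; -1, 1, 1, 1; 0, -2, 1, 1; 0, 0, -3, 1]

lemma det_helmert : helmert.det = 24 := by
  simp [helmert, det_succ_row_zero, Fin.sum_univ_succ, Fin.succAbove]
  norm_num

lemma secondMomentDensity_helmert_mulVec (y : Fin 4 → ℝ) :
    secondMomentDensity (helmert *ᵥ y) =
      exp (-2 * y 0 ^ 2) * exp (-6 * y 1 ^ 2) * exp (-12 * y 2 ^ 2) *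
        (16 * (y 3 ^ 2 * exp (-20 * y 3 ^ 2))) := by
  have hsum : ∑ i, (helmert *ᵥ y) i = 4 * y 3 := by
    simp only [helmert, mulVec, dotProduct, of_apply, cons_val', cons_val_fin_one,
      Fin.sum_univ_four, cons_val_zero, cons_val_one, cons_val]
    ring
  have hsq : ∑ i, (helmert *ᵥ y) i ^ 2 =
      2 * y 0 ^ 2 + 6 * y 1 ^ 2 + 12 * y 2 ^ 2 + 4 * y 3 ^ 2 := by
    simp only [helmert, mulVec, dotProduct, of_apply, cons_val', cons_val_fin_one,
      Fin.sum_univ_four, cons_val_zero, cons_val_one, cons_val]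
    ring
  calc secondMomentDensity (helmert *ᵥ y)
      = 16 * y 3 ^ 2 * exp (-2 * y 0 ^ 2 + -6 * y 1 ^ 2 + -12 * y 2 ^ 2 + -20 * y 3 ^ 2) := by
        rw [secondMomentDensity, hsum, hsq]
        ring_nf
    _ = _ := by
        simp only [exp_add]
        ring

lemma integral_secondMomentDensity :
    ∫ x : Fin 4 → ℝ, secondMomentDensity x = 2 * π ^ 2 / (5 * √5) := by
  have hfactor : ∫ y : Fin 4 → ℝ, secondMomentDensity (helmert *ᵥ y) =
      √(π / 2) * √(π / 6) * √(π / 12) * (16 * (√(π / 20) / (2 * 20))) := by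
    have := integral_fintype_prod_eq_prod (μ := fun _ => (volume : Measure ℝ))
      ![fun t => exp (-2 * t ^ 2), fun t => exp (-6 * t ^ 2), fun t => exp (-12 * t ^ 2),
        fun t => 16 * (t ^ 2 * exp (-20 * t ^ 2))]
    simp only [Fin.prod_univ_four, Matrix.cons_val] at this
    simp_rw [secondMomentDensity_helmert_mulVec, volume_pi, this, integral_gaussian,
      integral_const_mul, integral_sq_mul_exp_neg_mul_sq (by norm_num : (0 : ℝ) < 20)]
  rw [integral_comp_mulVec (by norm_num [det_helmert]), det_helmert, abs_of_pos (by norm_num)]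
    at hfactor
  -- `(π/2)(π/6)(π/12)(π/20) = π⁴ / (24² · 5)`
  have hsqrt : √(π / 2) * √(π / 6) * √(π / 12) * √(π / 20) = π ^ 2 / (24 * √5) := by
    rw [← sqrt_mul (by positivity), ← sqrt_mul (by positivity), ← sqrt_mul (by positivity),
      sqrt_eq_iff_mul_self_eq (by positivity) (by positivity)]
    field_simp
    rw [sq_sqrt (by norm_num)]
    ring
  calc ∫ x, secondMomentDensity x = 24 * (24⁻¹ * ∫ x, secondMomentDensity x) := by ring
    _ = 24 * (16 / 40) * (√(π / 2) * √(π / 6) * √(π / 12) * √(π / 20)) := by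
        rw [hfactor]
        ring
    _ = 2 * π ^ 2 / (5 * √5) := by
        rw [hsqrt]
        field_simp
        ring

/-- `lim_{α→0⁺} α³ · ∑_{p∈ℤ⁴} σ(p)² · e^{-α(|p|² + σ(p)²)} = 2π²/(5√5)`. -/
theorem stmt10 :
    Tendsto (fun α : ℝ =>
      α ^ 3 * ∑' p : Fin 4 → ℤ,
        (∑ i, (p i : ℝ)) ^ 2 *
          Real.exp (-α * ((∑ i, (p i : ℝ) ^ 2) + (∑ i, (p i : ℝ)) ^ 2)))
      (nhdsWithin 0 (Set.Ioi 0)) (nhds (2 * Real.pi ^ 2 / (5 * Real.sqrt 5))) := by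
  have hsqrt : Tendsto (fun α : ℝ => √α) (𝓝[>] 0) (𝓝[>] 0) :=
    tendsto_nhdsWithin_iff.mpr ⟨(continuous_sqrt.tendsto' 0 0 sqrt_zero).mono_left
      nhdsWithin_le_nhds, eventually_nhdsWithin_of_forall fun _ hα => sqrt_pos.mpr hα⟩
  have hlim := (tendsto_latticeRiemannSum (continuous_secondMomentDensity (ι := Fin 4))
    (integrable_exp_neg_sum_sq_div_two.const_mul _)
    fun _ _ hzx => abs_secondMomentDensity_le hzx).comp hsqrt
  rw [integral_secondMomentDensity] at hlim
  refine hlim.congr' (eventually_nhdsWithin_of_forall fun α (hα : 0 < α) => ?_)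
  have hpow : √α ^ 4 = α ^ 2 := by rw [show 4 = 2 * 2 by rfl, pow_mul, sq_sqrt hα.le]
  rw [Function.comp_apply, latticeRiemannSum_secondMomentDensity_sqrt hα.le, Fintype.card_fin,
    hpow]
  ring
end

section
/- Let m > 0. For p = (p₁,p₂,p₃,p₄) ∈ ℤ⁴ write |p|² = ∑_k p_k², σ(p) = ∑_k p_k, and χ(p) = |p|² + σ(p)² + m². Then lim_{Λ→∞} (1/log Λ) · ∑_{p∈ℤ⁴, ‖p‖₂≤Λ} 1/χ(p)² = 2π²/√5. -/
/-!
Write `Q(x) = |x|² + σ(x)²`. Its Gram matrix `1 + J` has determinant `5`, so `{Q ≤ 1}` is an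
ellipsoid of volume `(π²/2)/√5`, and by Riemann-sum counting the number `N(k)` of `p ∈ ℤ⁴` with
`Q(p) ≤ k` satisfies `N(k) ~ V k²`, `V = π²/(2√5)`. Since `Q` is integer valued on `ℤ⁴`, summation
by parts writes `∑_{Q(p) ≤ n} g(Q(p))`, `g(k) = (k + m²)⁻²`, as a bounded boundary term plus
`∑_{k<n} N(k) (g(k) - g(k+1))`, whose terms are `~ 2V/k`; hence the sum is `~ 2V log n`. The
Euclidean ball of radius `Λ` lies between `{Q ≤ Λ²}` and `{Q ≤ 5Λ²}`, and both give `2V · 2 log Λ`.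
-/

open Filter Topology Finset Asymptotics Real MeasureTheory Bornology
open scoped Pointwise Matrix

theorem isEquivalent_harmonic_log :
    (fun n : ℕ => (harmonic n : ℝ)) ~[atTop] fun n => log n :=
  IsLittleO.isEquivalent <| (tendsto_harmonic_sub_log.isBigO_one ℝ).trans_isLittleO
    (isLittleO_const_log_atTop.comp_tendsto tendsto_natCast_atTop_atTop)

theorem tendsto_sum_range_div_log {b : ℕ → ℝ} {c : ℝ}
    (h : Tendsto (fun k : ℕ => ((k : ℝ) + 1) * b k) atTop (𝓝 c)) :
    Tendsto (fun n : ℕ => (∑ k ∈ range n, b k) / log n) atTop (𝓝 c) := by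
  have hlog : Tendsto (fun n : ℕ => log n) atTop atTop :=
    tendsto_log_atTop.comp tendsto_natCast_atTop_atTop
  set w : ℕ → ℝ := fun k => ((k : ℝ) + 1)⁻¹
  have hw : ∀ n, ∑ k ∈ range n, w k = harmonic n := fun n => by simp [w, harmonic]
  have hH := isEquivalent_harmonic_log
  have hlo : (fun k => b k - c * w k) =o[atTop] w := by
    rw [isLittleO_iff_tendsto fun k hk => absurd hk (by positivity)]
    refine ((h.sub_const c).congr fun k => ?_).trans (by rw [sub_self])
    simp only [w]
    field_simp
  have hsum := hlo.sum_range (fun k => by positivity)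
    (by simpa only [hw] using hH.symm.tendsto_atTop hlog)
  simp only [hw, sum_sub_distrib, ← mul_sum] at hsum
  have hHlog : Tendsto (fun n : ℕ => (harmonic n : ℝ) / log n) atTop (𝓝 1) :=
    (isEquivalent_iff_tendsto_one (hlog.eventually_ne_atTop 0)).1 hH
  have := ((hsum.trans_isBigO hH.isBigO).tendsto_div_nhds_zero).add (hHlog.const_mul c)
  rw [zero_add, mul_one] at this
  refine this.congr' ?_
  filter_upwards [hlog.eventually_ne_atTop 0] with n hn
  field_simp
  ring

theorem tendsto_sq_mul_inv_add_sq (a : ℝ) :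
    Tendsto (fun x : ℝ => x ^ 2 * (1 / (x + a) ^ 2)) atTop (𝓝 1) := by
  have hF : ContinuousAt (fun y : ℝ => 1 / (1 + a * y) ^ 2) 0 :=
    ContinuousAt.div continuousAt_const (by fun_prop) (by simp)
  have := hF.tendsto.comp tendsto_inv_atTop_zero
  simp only [mul_zero, add_zero, one_pow, div_one] at this
  refine this.congr' ?_
  filter_upwards [eventually_gt_atTop 0, eventually_gt_atTop (-a)] with x hx hxa
  have : x + a ≠ 0 := by linarith
  have : x ≠ 0 := hx.ne'
  simp only [Function.comp_apply]
  field_simp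

theorem tendsto_cube_mul_inv_sq_sub_inv_sq (a : ℝ) :
    Tendsto (fun x : ℝ => x ^ 2 * (x + 1) * (1 / (x + a) ^ 2 - 1 / (x + 1 + a) ^ 2))
      atTop (𝓝 2) := by
  have hF : ContinuousAt (fun y : ℝ =>
      (1 + y) * (2 + (2 * a + 1) * y) / ((1 + a * y) ^ 2 * (1 + (1 + a) * y) ^ 2)) 0 :=
    ContinuousAt.div (by fun_prop) (by fun_prop) (by simp)
  have := hF.tendsto.comp tendsto_inv_atTop_zero
  simp only [mul_zero, add_zero, one_pow, mul_one, one_mul, div_one] at this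
  refine this.congr' ?_
  filter_upwards [eventually_gt_atTop 0, eventually_gt_atTop (-a)] with x hx hxa
  have : x + a ≠ 0 := by linarith
  have : x + 1 + a ≠ 0 := by linarith
  have : x + (1 + a) ≠ 0 := by linarith
  have : x ≠ 0 := hx.ne'
  simp only [Function.comp_apply]
  field_simp
  ring

theorem sum_comp_eq_card_mul_add_sum_card_mul_sub {α R : Type*} [CommRing R] {φ : α → ℕ}
    {E : ℕ → Finset α} (hE : ∀ n p, p ∈ E n ↔ φ p ≤ n) (g : ℕ → R) (n : ℕ) :
    ∑ p ∈ E n, g (φ p) = #(E n) * g n + ∑ k ∈ range n, #(E k) * (g k - g (k + 1)) := by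
  classical
  induction n with
  | zero =>
    rw [range_zero, sum_empty, add_zero, ← nsmul_eq_mul, ← sum_const]
    exact sum_congr rfl fun p hp => by rw [Nat.le_zero.1 ((hE 0 p).1 hp)]
  | succ n ih =>
    have hsub : E n ⊆ E (n + 1) := fun p hp => (hE _ p).2 (((hE n p).1 hp).trans n.le_succ)
    have hlayer : ∀ p ∈ E (n + 1) \ E n, φ p = n + 1 := fun p hp => by
      rw [Finset.mem_sdiff, hE, hE] at hp
      omega
    rw [← sum_sdiff hsub, sum_congr rfl fun p hp => congrArg g (hlayer p hp), sum_const,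
      card_sdiff_of_subset hsub, nsmul_eq_mul, Nat.cast_sub (card_le_card hsub), ih,
      sum_range_succ]
    ring

theorem tendsto_sum_inv_sq_div_log {α : Type*} {φ : α → ℕ} {E : ℕ → Finset α}
    (hE : ∀ n p, p ∈ E n ↔ φ p ≤ n) {V : ℝ}
    (hN : Tendsto (fun k : ℕ => (#(E k) : ℝ) / k ^ 2) atTop (𝓝 V)) (a : ℝ) :
    Tendsto (fun n : ℕ => (∑ p ∈ E n, 1 / ((φ p : ℝ) + a) ^ 2) / log n) atTop (𝓝 (2 * V)) := by
  set g : ℕ → ℝ := fun k => 1 / ((k : ℝ) + a) ^ 2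
  have hlog : Tendsto (fun n : ℕ => log n) atTop atTop :=
    tendsto_log_atTop.comp tendsto_natCast_atTop_atTop
  have hboundary : Tendsto (fun n : ℕ => #(E n) * g n) atTop (𝓝 V) := by
    have := hN.mul ((tendsto_sq_mul_inv_add_sq a).comp tendsto_natCast_atTop_atTop)
    rw [mul_one] at this
    refine this.congr' ?_
    filter_upwards [eventually_ne_atTop 0] with n hn
    simp only [Function.comp_apply, g]
    field_simp
  have hbulk : Tendsto (fun k : ℕ => ((k : ℝ) + 1) * (#(E k) * (g k - g (k + 1)))) atTop
      (𝓝 (2 * V)) := by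
    have := hN.mul ((tendsto_cube_mul_inv_sq_sub_inv_sq a).comp tendsto_natCast_atTop_atTop)
    rw [mul_comm V] at this
    refine this.congr' ?_
    filter_upwards [eventually_ne_atTop 0] with n hn
    simp only [Function.comp_apply, g]
    push_cast
    field_simp
  have := (hboundary.div_atTop hlog).add (tendsto_sum_range_div_log hbulk)
  rw [zero_add] at this
  refine this.congr fun n => ?_
  rw [← add_div, ← sum_comp_eq_card_mul_add_sum_card_mul_sub hE g]

theorem tendsto_comp_floor_mul_sq_div_log {u : ℕ → ℝ} {L c : ℝ} (hc : 0 < c)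
    (hu : Tendsto (fun n : ℕ => u n / log n) atTop (𝓝 L)) :
    Tendsto (fun Λ : ℝ => u ⌊c * Λ ^ 2⌋₊ / log Λ) atTop (𝓝 (2 * L)) := by
  have hx : Tendsto (fun Λ : ℝ => c * Λ ^ 2) atTop atTop :=
    (tendsto_pow_atTop two_ne_zero).const_mul_atTop hc
  have hfloor : (fun Λ : ℝ => log ⌊c * Λ ^ 2⌋₊) ~[atTop] fun Λ => 2 * log Λ := by
    refine (((isEquivalent_nat_floor (R := ℝ)).comp_tendsto hx).log hx).trans
      (IsLittleO.isEquivalent ?_)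
    refine ((isLittleO_const_log_atTop (c := log c)).const_mul_right two_ne_zero).congr' ?_
      .rfl
    filter_upwards [eventually_gt_atTop 0] with Λ hΛ
    simp only [Pi.sub_apply, Function.comp_apply]
    rw [log_mul hc.ne' (by positivity), log_pow]
    push_cast
    ring
  have hratio : Tendsto (fun Λ : ℝ => log ⌊c * Λ ^ 2⌋₊ / (2 * log Λ)) atTop (𝓝 1) :=
    (isEquivalent_iff_tendsto_one
      ((tendsto_log_atTop.const_mul_atTop two_pos).eventually_ne_atTop 0)).1 hfloor
  have := ((hu.comp (tendsto_nat_floor_atTop.comp hx)).mul hratio).const_mul 2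
  rw [mul_one] at this
  refine this.congr' ?_
  filter_upwards [eventually_gt_atTop 1, (tendsto_nat_floor_atTop.comp hx).eventually_ge_atTop 2]
    with Λ hΛ hk
  have : log ⌊c * Λ ^ 2⌋₊ ≠ 0 := (log_pos (by exact_mod_cast hk)).ne'
  have : log Λ ≠ 0 := (log_pos hΛ).ne'
  simp only [Function.comp_apply]
  field_simp

theorem inv_smul_mem_setOf_le_one_iff {E : Type*} [AddCommGroup E] [Module ℝ E] {Q : E → ℝ}
    (hQ : ∀ (r : ℝ) x, Q (r • x) = r ^ 2 * Q x) {r : ℝ} (hr : 0 < r) (x : E) :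
    r⁻¹ • x ∈ {y | Q y ≤ 1} ↔ Q x ≤ r ^ 2 := by
  rw [Set.mem_ofPred_eq, hQ, inv_pow, inv_mul_le_iff₀ (by positivity), mul_one]

section Counting

variable {ι : Type*} [Fintype ι]

theorem coe_span_range_basisFun :
    (Submodule.span ℤ (Set.range (Pi.basisFun ℝ ι)) : Set (ι → ℝ)) =
      Set.range fun (p : ι → ℤ) i => (p i : ℝ) := by
  ext x
  rw [SetLike.mem_coe, (Pi.basisFun ℝ ι).mem_span_iff_repr_mem ℤ x]
  simp only [Pi.basisFun_repr, Set.mem_range, algebraMap_int_eq, eq_intCast]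
  exact ⟨fun h => ⟨fun i => (h i).choose, funext fun i => (h i).choose_spec⟩,
    fun ⟨p, hp⟩ i => ⟨p i, congrFun hp i⟩⟩

theorem natCard_inter_inv_smul_span (s : Set (ι → ℝ)) {r : ℝ} (hr : r ≠ 0) :
    Nat.card ↑(s ∩ r⁻¹ • (Submodule.span ℤ (Set.range (Pi.basisFun ℝ ι)) : Set (ι → ℝ))) =
      Nat.card {p : ι → ℤ // r⁻¹ • (fun i => (p i : ℝ)) ∈ s} := by
  have hinj : Function.Injective fun (p : ι → ℤ) => r⁻¹ • fun i => (p i : ℝ) := by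
    intro p q h
    funext i
    exact_mod_cast congrFun (smul_right_injective _ (inv_ne_zero hr) h) i
  rw [← Set.coe_ofPred, ← Nat.card_image_of_injective hinj, coe_span_range_basisFun,
    Set.smul_set_range, Set.inter_comm, ← Set.image_preimage_eq_range_inter]
  rfl

theorem tendsto_card_le_sq_div_pow {Q : (ι → ℝ) → ℝ} (hQ : ∀ (r : ℝ) x, Q (r • x) = r ^ 2 * Q x)
    (hb : IsBounded {x | Q x ≤ 1}) (hm : MeasurableSet {x | Q x ≤ 1})
    (hc : Convex ℝ {x | Q x ≤ 1}) :
    Tendsto (fun r : ℝ => (Nat.card {p : ι → ℤ // Q (fun i => (p i : ℝ)) ≤ r ^ 2} : ℝ) /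
      r ^ Fintype.card ι) atTop (𝓝 (volume.real {x | Q x ≤ 1})) := by
  have hmem {r : ℝ} (hr : 0 < r) (x : ι → ℝ) : x ∈ r • {y | Q y ≤ 1} ↔ Q x ≤ r ^ 2 :=
    (Set.mem_smul_set_iff_inv_smul_mem₀ hr.ne' _ _).trans (inv_smul_mem_setOf_le_one_iff hQ hr x)
  have hmono : ∀ ⦃r r' : ℝ⦄, 0 < r → r ≤ r' → r • {y | Q y ≤ 1} ⊆ r' • {y | Q y ≤ 1} :=
    fun r r' hr hrr' x hx => (hmem (hr.trans_le hrr') x).2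
      (((hmem hr x).1 hx).trans (pow_le_pow_left₀ hr.le hrr' 2))
  refine (tendsto_card_div_pow_atTop_volume' _ hb hm (hc.addHaar_frontier volume)
    hmono).congr' ?_
  filter_upwards [eventually_gt_atTop 0] with r hr
  rw [natCard_inter_inv_smul_span _ hr.ne',
    Nat.card_congr (Equiv.subtypeEquivRight fun p => inv_smul_mem_setOf_le_one_iff hQ hr _)]

end Counting

def quadForm (x : Fin 4 → ℝ) : ℝ := ∑ i, x i ^ 2 + (∑ i, x i) ^ 2

namespace quadForm

theorem smul (r : ℝ) (x : Fin 4 → ℝ) : quadForm (r • x) = r ^ 2 * quadForm x := by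
  simp only [quadForm, Pi.smul_apply, smul_eq_mul, mul_pow, ← mul_sum]
  ring

theorem sum_sq_le (x : Fin 4 → ℝ) : ∑ i, x i ^ 2 ≤ quadForm x :=
  le_add_of_nonneg_right (sq_nonneg _)

theorem le_five_mul_sum_sq (x : Fin 4 → ℝ) : quadForm x ≤ 5 * ∑ i, x i ^ 2 := by
  have := sq_sum_le_card_mul_sum_sq (s := univ) (f := x)
  simp only [card_univ, Fintype.card_fin, Nat.cast_ofNat] at this
  unfold quadForm
  linarith

/-- `1 + c J` with `J` the all-ones matrix and `c = (√5 - 1) / 4`, a root of `4c² + 2c = 1`,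
so that its square is `1 + J`, the Gram matrix of `quadForm`. -/
noncomputable def sqrtMatrix : Matrix (Fin 4) (Fin 4) ℝ :=
  1 + Matrix.replicateCol (Fin 1) (fun _ : Fin 4 => (√5 - 1) / 4) *
    Matrix.replicateRow (Fin 1) (fun _ : Fin 4 => (1 : ℝ))

theorem det_sqrtMatrix : sqrtMatrix.det = √5 := by
  refine (Matrix.det_one_add_replicateCol_mul_replicateRow (ι := Fin 1) _ _).trans ?_
  simp [dotProduct]
  ring

theorem sqrtMatrix_mulVec (x : Fin 4 → ℝ) (i : Fin 4) :
    (sqrtMatrix *ᵥ x) i = x i + (√5 - 1) / 4 * ∑ j, x j := by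
  simp [sqrtMatrix, Matrix.mulVec, dotProduct, Matrix.one_apply, Matrix.mul_apply, add_mul,
    sum_add_distrib, mul_sum]

theorem eq_sum_sq_sqrtMatrix_mulVec (x : Fin 4 → ℝ) :
    quadForm x = ∑ i, (sqrtMatrix *ᵥ x) i ^ 2 := by
  have h5 : √5 ^ 2 = 5 := sq_sqrt (by norm_num)
  simp only [sqrtMatrix_mulVec, quadForm, Fin.sum_univ_four]
  linear_combination (-(x 0 + x 1 + x 2 + x 3) ^ 2 / 4) * h5

theorem setOf_le_one_eq_preimage :
    {x | quadForm x ≤ 1} = Matrix.toLin' sqrtMatrix ⁻¹'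
      (WithLp.toLp 2 ⁻¹' Metric.closedBall 0 1) := by
  ext x
  simp [eq_sum_sq_sqrtMatrix_mulVec, EuclideanSpace.norm_eq]

theorem convex_setOf_le_one : Convex ℝ {x | quadForm x ≤ 1} := by
  rw [setOf_le_one_eq_preimage, ← WithLp.coe_symm_linearEquiv 2 ℝ]
  exact ((convex_closedBall _ _).linear_preimage _).linear_preimage _

theorem volume_real_setOf_le_one : volume.real {x | quadForm x ≤ 1} = π ^ 2 / (2 * √5) := by
  have hdet : LinearMap.det (Matrix.toLin' sqrtMatrix) = √5 := by
    rw [LinearMap.det_toLin', det_sqrtMatrix]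
  rw [measureReal_def, setOf_le_one_eq_preimage,
    Measure.addHaar_preimage_linearMap _ (by rw [hdet]; positivity), hdet,
    (PiLp.volume_preserving_toLp _).measure_preimage measurableSet_closedBall.nullMeasurableSet,
    InnerProductSpace.volume_closedBall_of_dim_even (k := 2) (by simp)]
  simp [ENNReal.toReal_ofReal (by positivity : 0 ≤ π ^ 2 / 2),
    abs_of_pos (by positivity : 0 < √5)]
  field_simp

theorem isBounded_setOf_le_one : IsBounded {x | quadForm x ≤ 1} := by
  refine (Metric.isBounded_closedBall (x := 0) (r := 1)).subset fun x hx => ?_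
  rw [mem_closedBall_zero_iff, pi_norm_le_iff_of_nonneg zero_le_one]
  intro i
  rw [Real.norm_eq_abs, ← sq_le_one_iff_abs_le_one]
  exact (single_le_sum (fun j _ => sq_nonneg (x j)) (mem_univ i)).trans
    ((sum_sq_le x).trans hx)

theorem measurableSet_setOf_le_one : MeasurableSet {x | quadForm x ≤ 1} :=
  measurableSet_le (by unfold quadForm; fun_prop) measurable_const

end quadForm

def quadFormNat (p : Fin 4 → ℤ) : ℕ := ∑ i, (p i).natAbs ^ 2 + (∑ i, p i).natAbs ^ 2

theorem cast_quadFormNat (p : Fin 4 → ℤ) :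
    (quadFormNat p : ℝ) = quadForm fun i => (p i : ℝ) := by
  simp [quadFormNat, quadForm]

noncomputable def latticeSublevel (n : ℕ) : Finset (Fin 4 → ℤ) :=
  {p ∈ Fintype.piFinset fun _ => Icc (-(n : ℤ)) n | quadFormNat p ≤ n}

theorem mem_latticeSublevel {n : ℕ} {p : Fin 4 → ℤ} :
    p ∈ latticeSublevel n ↔ quadFormNat p ≤ n := by
  refine ⟨fun h => (mem_filter.1 h).2,
    fun h => mem_filter.2 ⟨Fintype.mem_piFinset.2 fun i => ?_, h⟩⟩
  have : (p i).natAbs ≤ n := calc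
    (p i).natAbs ≤ (p i).natAbs ^ 2 := Nat.le_self_pow two_ne_zero _
    _ ≤ ∑ j, (p j).natAbs ^ 2 :=
      single_le_sum (fun j _ => Nat.zero_le ((p j).natAbs ^ 2)) (mem_univ i)
    _ ≤ n := (Nat.le_add_right _ _).trans h
  rw [mem_Icc, ← abs_le, Int.abs_eq_natAbs]
  exact_mod_cast this

theorem tendsto_card_latticeSublevel_div_sq :
    Tendsto (fun k : ℕ => (#(latticeSublevel k) : ℝ) / k ^ 2) atTop (𝓝 (π ^ 2 / (2 * √5))) := by
  have h := tendsto_card_le_sq_div_pow quadForm.smul quadForm.isBounded_setOf_le_one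
    quadForm.measurableSet_setOf_le_one quadForm.convex_setOf_le_one
  rw [quadForm.volume_real_setOf_le_one, Fintype.card_fin] at h
  refine (h.comp (tendsto_sqrt_atTop.comp tendsto_natCast_atTop_atTop)).congr fun k => ?_
  have hk : √(k : ℝ) ^ 2 = k := sq_sqrt k.cast_nonneg
  have hcard : Nat.card {p : Fin 4 → ℤ // quadForm (fun i => (p i : ℝ)) ≤ k} =
      #(latticeSublevel k) := by
    rw [← Nat.card_eq_finsetCard]
    exact Nat.card_congr <| Equiv.subtypeEquivRight fun p => by
      rw [mem_latticeSublevel, ← Nat.cast_le (α := ℝ), cast_quadFormNat]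
  simp only [Function.comp_apply]
  rw [hk, hcard, show √(k : ℝ) ^ 4 = (√(k : ℝ) ^ 2) ^ 2 by ring, hk]

def latticeBall (Λ : ℝ) : Set (Fin 4 → ℤ) := {p | √(∑ i, (p i : ℝ) ^ 2) ≤ Λ}

theorem latticeSublevel_floor_sq_subset {Λ : ℝ} (hΛ : 0 ≤ Λ) :
    ↑(latticeSublevel ⌊Λ ^ 2⌋₊) ⊆ latticeBall Λ := fun p hp => by
  rw [mem_coe, mem_latticeSublevel, ← Nat.cast_le (α := ℝ), cast_quadFormNat] at hp
  refine sqrt_le_iff.2 ⟨hΛ, ?_⟩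
  exact (quadForm.sum_sq_le _).trans (hp.trans (Nat.floor_le (by positivity)))

theorem latticeBall_subset {Λ : ℝ} :
    latticeBall Λ ⊆ ↑(latticeSublevel ⌊5 * Λ ^ 2⌋₊) := fun p hp => by
  rw [mem_coe, mem_latticeSublevel, Nat.le_floor_iff (by positivity), cast_quadFormNat]
  have h := pow_le_pow_left₀ (sqrt_nonneg _) hp 2
  rw [sq_sqrt (by positivity)] at h
  linarith [quadForm.le_five_mul_sum_sq fun i => (p i : ℝ)]

noncomputable def ballSum (m Λ : ℝ) : ℝ :=
  ∑' p, (latticeBall Λ).indicator (fun p => 1 / (quadForm (fun i => (p i : ℝ)) + m ^ 2) ^ 2) p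

noncomputable def sublevelSum (m : ℝ) (n : ℕ) : ℝ :=
  ∑ p ∈ latticeSublevel n, 1 / ((quadFormNat p : ℝ) + m ^ 2) ^ 2

theorem ballSum_eq_sum (m : ℝ) (Λ : ℝ) :
    ballSum m Λ = ∑ p ∈ latticeSublevel ⌊5 * Λ ^ 2⌋₊,
      (latticeBall Λ).indicator (fun p => 1 / ((quadFormNat p : ℝ) + m ^ 2) ^ 2) p := by
  simp only [ballSum, ← cast_quadFormNat]
  exact tsum_eq_sum fun p hp => Set.indicator_of_notMem (fun h => hp (latticeBall_subset h)) _

theorem sublevelSum_floor_sq_le_ballSum (m : ℝ) {Λ : ℝ} (hΛ : 0 ≤ Λ) :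
    sublevelSum m ⌊Λ ^ 2⌋₊ ≤ ballSum m Λ := by
  have hsub := latticeSublevel_floor_sq_subset hΛ
  rw [ballSum_eq_sum, sublevelSum]
  calc _ = ∑ p ∈ latticeSublevel ⌊Λ ^ 2⌋₊,
        (latticeBall Λ).indicator (fun p => 1 / ((quadFormNat p : ℝ) + m ^ 2) ^ 2) p :=
      sum_congr rfl fun p hp => (Set.indicator_of_mem (hsub hp) _).symm
    _ ≤ _ := sum_le_sum_of_subset_of_nonneg (fun p hp => latticeBall_subset (hsub hp))
      fun p _ _ => Set.indicator_nonneg (fun _ _ => by positivity) _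

theorem ballSum_le_sublevelSum_floor (m : ℝ) (Λ : ℝ) :
    ballSum m Λ ≤ sublevelSum m ⌊5 * Λ ^ 2⌋₊ := by
  rw [ballSum_eq_sum, sublevelSum]
  exact sum_le_sum fun p _ => Set.indicator_le_self' (fun p _ => by positivity) p

theorem tendsto_sublevelSum_div_log (m : ℝ) :
    Tendsto (fun n : ℕ => sublevelSum m n / log n) atTop (𝓝 (π ^ 2 / √5)) := by
  have := tendsto_sum_inv_sq_div_log (fun n p => mem_latticeSublevel)
    tendsto_card_latticeSublevel_div_sq (m ^ 2)
  rwa [show 2 * (π ^ 2 / (2 * √5)) = π ^ 2 / √5 by field_simp] at this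

theorem stmt17_general (m : ℝ) :
    Tendsto (fun Λ : ℝ =>
      (1 / Real.log Λ) *
        ∑' p : Fin 4 → ℤ,
          Set.indicator {p : Fin 4 → ℤ | Real.sqrt (∑ i, (p i : ℝ) ^ 2) ≤ Λ}
            (fun p =>
              1 / ((∑ i, (p i : ℝ) ^ 2) + (∑ i, (p i : ℝ)) ^ 2 + m ^ 2) ^ 2) p)
      atTop (nhds (2 * Real.pi ^ 2 / Real.sqrt 5)) := by
  change Tendsto (fun Λ => 1 / log Λ * ballSum m Λ) _ _
  have hS := tendsto_sublevelSum_div_log m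
  have hlower := tendsto_comp_floor_mul_sq_div_log one_pos hS
  have hupper := tendsto_comp_floor_mul_sq_div_log (by norm_num : (0 : ℝ) < 5) hS
  simp only [one_mul] at hlower
  rw [mul_div_assoc]
  refine tendsto_of_tendsto_of_tendsto_of_le_of_le' hlower hupper ?_ ?_ <;>
    filter_upwards [eventually_ge_atTop 1] with Λ hΛ <;> rw [one_div_mul_eq_div]
  · exact div_le_div_of_nonneg_right (sublevelSum_floor_sq_le_ballSum m (by linarith))
      (log_nonneg hΛ)
  · exact div_le_div_of_nonneg_right (ballSum_le_sublevelSum_floor m Λ) (log_nonneg hΛ)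

/-- For `m > 0`, with `χ(p) = |p|² + σ(p)² + m²` on `ℤ⁴`,
`lim_{Λ→∞} (1/log Λ) · ∑_{‖p‖₂≤Λ} χ(p)⁻² = 2π²/√5`. -/
theorem stmt17 (m : ℝ) (hm : 0 < m) :
    Tendsto (fun Λ : ℝ =>
      (1 / Real.log Λ) *
        ∑' p : Fin 4 → ℤ,
          Set.indicator {p : Fin 4 → ℤ | Real.sqrt (∑ i, (p i : ℝ) ^ 2) ≤ Λ}
            (fun p =>
              1 / ((∑ i, (p i : ℝ) ^ 2) + (∑ i, (p i : ℝ)) ^ 2 + m ^ 2) ^ 2) p)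
      atTop (nhds (2 * Real.pi ^ 2 / Real.sqrt 5)) :=
  stmt17_general m
end
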